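/- Let f be a Bohr almost periodic function on ℝ with Fourier exponents in Λ. Then every uniform limit on ℝ of a sequence of translates f(· + τₙ), τₙ ∈ ℝ, is an almost periodic function that is Bohr-equivalent to f. -/

import Mathlib

noncomputable section

/-- Bohr almost periodicity: `f` is continuous and for every `ε > 0` the set of
`ε`-translation numbers of `f` is relatively dense in `ℝ`. -/
def IsAP (f : ℝ → ℂ) : Prop :=
  Continuous f ∧ ∀ ε > (0 : ℝ), ∃ l > (0 : ℝ), ∀ x : ℝ, ∃ τ ∈ Set.Icc x (x + l),
    ∀ t : ℝ, ‖f (t + τ) - f t‖ ≤ ε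

/-- `c` is the Fourier (Bohr mean) coefficient of `f` at frequency `μ`. -/
def HasFourierCoeff (f : ℝ → ℂ) (μ : ℝ) (c : ℂ) : Prop :=
  Filter.Tendsto
    (fun T : ℝ => (1 / (2 * T) : ℂ) *
      ∫ t in (-T)..T, f t * Complex.exp (-(Complex.I * (μ : ℂ) * (t : ℂ))))
    Filter.atTop (nhds c)

/-- `f` has Fourier series `∑ aⱼ e^{i λⱼ t}`: its Fourier coefficient at `λⱼ` is
`aⱼ`, and its Fourier coefficient vanishes at every other frequency. -/
def HasFourierSeries (f : ℝ → ℂ) (lam : ℕ → ℝ) (a : ℕ → ℂ) : Prop :=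
  (∀ j, HasFourierCoeff f (lam j) (a j)) ∧
    ∀ μ : ℝ, μ ∉ Set.range lam → HasFourierCoeff f μ 0

/-- Bohr's `*∼` equivalence of two series `∑ aⱼ e^{iλⱼ t}` and `∑ bⱼ e^{iλⱼ t}`:
for each `n` there is a `ℚ`-linear map `ψₙ` from the `ℚ`-span of `{λ₀, …, λₙ}`
to `ℝ` with `bⱼ = aⱼ e^{i ψₙ(λⱼ)}` for `j ≤ n`. -/
def SeriesEquiv (lam : ℕ → ℝ) (a b : ℕ → ℂ) : Prop :=
  ∀ n : ℕ, ∃ ψ : (Submodule.span ℚ (lam '' {j | j ≤ n})) →ₗ[ℚ] ℝ,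
    ∀ j (hj : j ≤ n), b j = a j *
      Complex.exp (Complex.I *
        (ψ ⟨lam j, Submodule.subset_span ⟨j, hj, rfl⟩⟩ : ℝ))

/-!
Translation by `s` multiplies the Bohr mean of `f e^{-iμt}` over `[-T, T]` by `e^{iμs}` up to an
error `O(|s|/T)`. Bohr means over `[-T, T]` are `1`-Lipschitz for the sup norm uniformly in `T`, so
they commute with uniform limits, and the limit `g` has the coefficients
`b_j = lim_n a_j e^{iλ_j τ_n}`.

For the phases, choose a `ℚ`-basis `e` of `span_ℚ {λ_0, …, λ_n}` in which every `λ_j` has integer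
coordinates. Along a subsequence the points `(e^{i e_k τ_n})_k` of the compact torus converge to
some `(e^{iθ_k})_k`, and the `ℚ`-linear map `ψ` with `ψ(e_k) = θ_k` satisfies
`e^{iψ(x)} = lim e^{i x τ_n}` for every integer combination `x` of the `e_k`. Integrality is
essential: a character of `ℚ` need not be of the form `x ↦ e^{iψ(x)}`.
-/

open Filter Topology

section UniformLimits

variable {ι α E : Type*} [UniformSpace E] {F : ι → α → E} {G : α → E} {p : Filter ι}
  {p' : Filter α} {c : ι → E}

theorem TendstoUniformlyOnFilter.cauchy_map_of_tendsto [p'.NeBot] [p.NeBot]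
    (hFG : TendstoUniformlyOnFilter F G p p') (hF : ∀ i, Tendsto (F i) p' (𝓝 (c i))) :
    Cauchy (map c p) := by
  refine ⟨map_neBot, ?_⟩
  rw [prod_map_map_eq']
  refine (uniformity_hasBasis_closed.ge_iff).2 fun u ⟨hu, hclosed⟩ => mem_map.2 ?_
  filter_upwards [(hFG.uniformCauchySeqOnFilter u hu).curry] with ij hij
  exact hclosed.mem_of_tendsto ((hF ij.1).prodMk_nhds (hF ij.2)) hij

theorem TendstoUniformlyOnFilter.exists_tendsto_of_tendsto [CompleteSpace E] [p'.NeBot] [p.NeBot]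
    (hFG : TendstoUniformlyOnFilter F G p p') (hF : ∀ i, Tendsto (F i) p' (𝓝 (c i))) :
    ∃ L, Tendsto c p (𝓝 L) ∧ Tendsto G p' (𝓝 L) := by
  obtain ⟨L, hL⟩ := CompleteSpace.complete (hFG.cauchy_map_of_tendsto hF)
  exact ⟨L, hL, hFG.tendsto_of_eventually_tendsto (Eventually.of_forall hF) hL⟩

end UniformLimits

section RationalCharacters

variable {V : Type*} [AddCommGroup V] [Module ℚ V]

theorem Module.Basis.exists_repr_intCast_of_finite [FiniteDimensional ℚ V] {ι : Type*} [Finite ι]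
    (w : ι → V) :
    ∃ e : Module.Basis (Fin (Module.finrank ℚ V)) ℚ V, ∀ i k, ∃ c : ℤ, e.repr (w i) k = c := by
  let e₀ := Module.finBasis ℚ V
  obtain ⟨N, hN⟩ := IsLocalization.exist_integer_multiples_of_finite (nonZeroDivisors ℤ)
    fun ik : ι × Fin (Module.finrank ℚ V) => e₀.repr (w ik.1) ik.2
  let u : ℚˣ := Units.mk0 ((N : ℤ) : ℚ) (by exact_mod_cast nonZeroDivisors.coe_ne_zero N)
  refine ⟨e₀.unitsSMul fun _ => u⁻¹, fun i k => ?_⟩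
  obtain ⟨c, hc⟩ := hN (i, k)
  refine ⟨c, ?_⟩
  rw [Module.Basis.repr_unitsSMul, inv_inv, Units.smul_def, Units.val_mk0]
  simpa [zsmul_eq_mul] using hc.symm

theorem Circle.exp_sum {ι : Type*} (s : Finset ι) (f : ι → ℝ) :
    Circle.exp (∑ i ∈ s, f i) = ∏ i ∈ s, Circle.exp (f i) :=
  map_sum Circle.expHom f s

theorem Circle.exp_linearMap_eq_prod_zpow {κ : Type*} [Fintype κ] (e : Module.Basis κ ℚ V)
    (ψ : V →ₗ[ℚ] ℝ) {x : V} {c : κ → ℤ} (hc : ∀ k, e.repr x k = c k) :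
    Circle.exp (ψ x) = ∏ k, Circle.exp (ψ (e k)) ^ c k := by
  conv_lhs => rw [← e.sum_repr x]
  simp only [map_sum, map_smul, hc, Rat.smul_def, Rat.cast_intCast, Circle.exp_sum,
    Circle.exp_intCast_mul]

theorem Module.Basis.exists_subseq_tendsto_circleExp {κ : Type*} [Fintype κ]
    (e : Module.Basis κ ℚ V) (ψs : ℕ → V →ₗ[ℚ] ℝ) :
    ∃ ψ : V →ₗ[ℚ] ℝ, ∃ φ : ℕ → ℕ, StrictMono φ ∧ ∀ x, (∀ k, ∃ c : ℤ, e.repr x k = c) →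
      Tendsto (fun m => Circle.exp (ψs (φ m) x)) atTop (𝓝 (Circle.exp (ψ x))) := by
  obtain ⟨z, φ, hφ, hz⟩ :=
    CompactSpace.tendsto_subseq fun m (k : κ) => Circle.exp (ψs m (e k))
  choose θ hθ using fun k => Circle.exp_surjective (z k)
  refine ⟨e.constr ℚ θ, φ, hφ, fun x hx => ?_⟩
  choose c hc using hx
  simp only [Circle.exp_linearMap_eq_prod_zpow e _ hc, e.constr_basis, hθ]
  have hcont : Continuous fun w : κ → Circle => ∏ k, w k ^ c k := by fun_prop
  exact (hcont.tendsto z).comp hz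

end RationalCharacters

namespace IsAP

variable {f : ℝ → ℂ}

theorem exists_norm_le (hf : IsAP f) : ∃ C, ∀ t, ‖f t‖ ≤ C := by
  obtain ⟨l, hl, hP⟩ := hf.2 1 one_pos
  obtain ⟨C, hC⟩ := isCompact_Icc.exists_bound_of_continuousOn (hf.1.continuousOn (s := Set.Icc 0 l))
  refine ⟨C + 1, fun t => ?_⟩
  obtain ⟨τ, hτ, hτf⟩ := hP (-t)
  have hmem : t + τ ∈ Set.Icc 0 l := ⟨by linarith [hτ.1], by linarith [hτ.2]⟩
  calc ‖f t‖ ≤ ‖f (t + τ)‖ + ‖f (t + τ) - f t‖ := norm_le_insert _ _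
    _ ≤ C + 1 := add_le_add (hC _ hmem) (hτf t)

theorem comp_add_right (hf : IsAP f) (s : ℝ) : IsAP fun t => f (t + s) := by
  refine ⟨hf.1.comp (continuous_add_const s), fun ε hε => ?_⟩
  obtain ⟨l, hl, hP⟩ := hf.2 ε hε
  refine ⟨l, hl, fun x => ?_⟩
  obtain ⟨τ, hτ, hτf⟩ := hP x
  exact ⟨τ, hτ, fun t => by simpa only [add_right_comm] using hτf (t + s)⟩

theorem of_tendstoUniformly {ι : Type*} {p : Filter ι} [p.NeBot] {F : ι → ℝ → ℂ} {g : ℝ → ℂ}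
    (hF : ∀ i, IsAP (F i)) (hFg : TendstoUniformly F g p) : IsAP g := by
  refine ⟨hFg.continuous (Frequently.of_forall fun i => (hF i).1), fun ε hε => ?_⟩
  obtain ⟨i, hi⟩ := (Metric.tendstoUniformly_iff.1 hFg (ε / 3) (by positivity)).exists
  obtain ⟨l, hl, hP⟩ := (hF i).2 (ε / 3) (by positivity)
  refine ⟨l, hl, fun x => ?_⟩
  obtain ⟨τ, hτ, hτF⟩ := hP x
  refine ⟨τ, hτ, fun t => ?_⟩
  rw [← dist_eq_norm]
  calc dist (g (t + τ)) (g t)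
      ≤ dist (g (t + τ)) (F i (t + τ)) + dist (F i (t + τ)) (F i t) + dist (F i t) (g t) :=
        dist_triangle4 _ _ _ _
    _ ≤ ε := by
        rw [dist_comm (F i t), dist_eq_norm (F i _)]
        linarith [hi (t + τ), hi t, hτF t]

end IsAP

theorem norm_integral_comp_add_right_sub_le {E : Type*} [NormedAddCommGroup E] [NormedSpace ℝ E]
    {φ : ℝ → E} (hφ : Continuous φ) {C : ℝ} (hC : ∀ t, ‖φ t‖ ≤ C) (a b s : ℝ) :
    ‖(∫ t in a..b, φ (t + s)) - ∫ t in a..b, φ t‖ ≤ 2 * C * |s| := by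
  rw [intervalIntegral.integral_comp_add_right,
    intervalIntegral.integral_interval_sub_interval_comm (hφ.intervalIntegrable _ _)
      (hφ.intervalIntegrable _ _) (hφ.intervalIntegrable _ _)]
  have hbound : ∀ x, ‖∫ t in x + s..x, φ t‖ ≤ C * |s| := fun x => by
    simpa using intervalIntegral.norm_integral_le_of_norm_le_const (a := x + s) (b := x)
      fun t _ => hC t
  linarith [norm_sub_le (∫ t in a + s..a, φ t) (∫ t in b + s..b, φ t), hbound a, hbound b]

def fourierMean (f : ℝ → ℂ) (μ T : ℝ) : ℂ :=
  (1 / (2 * T) : ℂ) * ∫ t in (-T)..T, f t * Complex.exp (-(Complex.I * (μ : ℂ) * (t : ℂ)))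

theorem hasFourierCoeff_iff {f : ℝ → ℂ} {μ : ℝ} {c : ℂ} :
    HasFourierCoeff f μ c ↔ Tendsto (fourierMean f μ) atTop (𝓝 c) := Iff.rfl

theorem norm_exp_neg_I_mul (μ t : ℝ) :
    ‖Complex.exp (-(Complex.I * (μ : ℂ) * (t : ℂ)))‖ = 1 := by
  rw [Complex.norm_exp]; simp

theorem continuous_mul_exp_neg_I_mul {f : ℝ → ℂ} (hf : Continuous f) (μ : ℝ) :
    Continuous fun t : ℝ => f t * Complex.exp (-(Complex.I * (μ : ℂ) * (t : ℂ))) := by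
  fun_prop

theorem norm_one_div_two_mul_ofReal {T : ℝ} (hT : 0 < T) :
    ‖(1 / (2 * T) : ℂ)‖ = 1 / (2 * T) := by
  simp [abs_of_pos hT]

theorem norm_fourierMean_le {f : ℝ → ℂ} {C : ℝ} (hC : ∀ t, ‖f t‖ ≤ C) (μ : ℝ) {T : ℝ}
    (hT : 0 < T) : ‖fourierMean f μ T‖ ≤ C := by
  rw [fourierMean, norm_mul, norm_one_div_two_mul_ofReal hT]
  calc 1 / (2 * T) * ‖∫ t in (-T)..T, f t * Complex.exp (-(Complex.I * (μ : ℂ) * (t : ℂ)))‖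
      ≤ 1 / (2 * T) * (C * |T - -T|) := by
        gcongr
        refine intervalIntegral.norm_integral_le_of_norm_le_const fun t _ => ?_
        rw [norm_mul, norm_exp_neg_I_mul, mul_one]
        exact hC t
    _ = C := by
        rw [show T - -T = 2 * T by ring, abs_of_pos (by positivity)]
        field_simp

theorem fourierMean_sub {f g : ℝ → ℂ} (hf : Continuous f) (hg : Continuous g) (μ T : ℝ) :
    fourierMean (f - g) μ T = fourierMean f μ T - fourierMean g μ T := by
  simp only [fourierMean, ← mul_sub, Pi.sub_apply, sub_mul]
  rw [intervalIntegral.integral_sub ((continuous_mul_exp_neg_I_mul hf μ).intervalIntegrable _ _)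
    ((continuous_mul_exp_neg_I_mul hg μ).intervalIntegrable _ _)]

theorem norm_fourierMean_comp_add_right_sub_le {f : ℝ → ℂ} (hf : Continuous f) {C : ℝ}
    (hC : ∀ t, ‖f t‖ ≤ C) (μ s : ℝ) {T : ℝ} (hT : 0 < T) :
    ‖fourierMean (fun t => f (t + s)) μ T - Complex.exp (Complex.I * μ * s) * fourierMean f μ T‖
      ≤ C * |s| / T := by
  set φ : ℝ → ℂ := fun t => f t * Complex.exp (-(Complex.I * (μ : ℂ) * (t : ℂ)))
  have hshift : ∀ t : ℝ, f (t + s) * Complex.exp (-(Complex.I * (μ : ℂ) * (t : ℂ)))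
      = Complex.exp (Complex.I * μ * s) * φ (t + s) := fun t => by
    simp only [φ, mul_left_comm _ (f (t + s)), ← Complex.exp_add]
    push_cast
    ring_nf
  have hφ : ∀ t, ‖φ t‖ ≤ C := fun t => by
    simp only [φ, norm_mul, norm_exp_neg_I_mul, mul_one, hC]
  have hdiff : fourierMean (fun t => f (t + s)) μ T
      - Complex.exp (Complex.I * μ * s) * fourierMean f μ T
      = Complex.exp (Complex.I * μ * s) * (1 / (2 * T) : ℂ) *
        ((∫ t in (-T)..T, φ (t + s)) - ∫ t in (-T)..T, φ t) := by
    simp only [fourierMean, hshift, intervalIntegral.integral_const_mul]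
    ring
  have hexp : ‖Complex.exp (Complex.I * μ * s)‖ = 1 := by rw [Complex.norm_exp]; simp
  rw [hdiff, norm_mul, norm_mul, hexp, one_mul, norm_one_div_two_mul_ofReal hT]
  calc 1 / (2 * T) * ‖(∫ t in (-T)..T, φ (t + s)) - ∫ t in (-T)..T, φ t‖
      ≤ 1 / (2 * T) * (2 * C * |s|) := by
        gcongr
        exact norm_integral_comp_add_right_sub_le (continuous_mul_exp_neg_I_mul hf μ) hφ _ _ _
    _ = C * |s| / T := by field_simp

theorem HasFourierCoeff.comp_add_right {f : ℝ → ℂ} (hf : Continuous f) {C : ℝ}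
    (hC : ∀ t, ‖f t‖ ≤ C) {μ : ℝ} {c : ℂ} (h : HasFourierCoeff f μ c) (s : ℝ) :
    HasFourierCoeff (fun t => f (t + s)) μ (c * Complex.exp (Complex.I * μ * s)) := by
  have herr : Tendsto (fun T => fourierMean (fun t => f (t + s)) μ T
      - Complex.exp (Complex.I * μ * s) * fourierMean f μ T) atTop (𝓝 0) :=
    squeeze_zero_norm' ((eventually_gt_atTop 0).mono fun T hT =>
      norm_fourierMean_comp_add_right_sub_le hf hC μ s hT)
      (tendsto_const_nhds.div_atTop tendsto_id)
  rw [hasFourierCoeff_iff, mul_comm, ← zero_add (_ * c)]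
  exact (herr.add (h.const_mul _)).congr fun T => sub_add_cancel _ _

theorem tendstoUniformlyOnFilter_fourierMean {ι : Type*} {p : Filter ι} [p.NeBot]
    {F : ι → ℝ → ℂ} {g : ℝ → ℂ} (hF : ∀ i, Continuous (F i)) (hFg : TendstoUniformly F g p)
    (μ : ℝ) :
    TendstoUniformlyOnFilter (fun i => fourierMean (F i) μ) (fourierMean g μ) p atTop := by
  have hg : Continuous g := hFg.continuous (Frequently.of_forall hF)
  refine Metric.tendstoUniformlyOnFilter_iff.2 fun ε hε => ?_
  filter_upwards [(Metric.tendstoUniformly_iff.1 hFg (ε / 2) (by positivity)).prod_mk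
    (eventually_gt_atTop 0)] with ⟨i, T⟩ ⟨hi, hT⟩
  rw [dist_eq_norm, ← fourierMean_sub hg (hF i)]
  refine (norm_fourierMean_le (fun t => ?_) μ hT).trans_lt (half_lt_self hε)
  rw [Pi.sub_apply, ← dist_eq_norm]
  exact (hi t).le

theorem HasFourierCoeff.exists_of_tendstoUniformly {ι : Type*} {p : Filter ι} [p.NeBot]
    {F : ι → ℝ → ℂ} {g : ℝ → ℂ} (hF : ∀ i, Continuous (F i)) (hFg : TendstoUniformly F g p)
    {μ : ℝ} {c : ι → ℂ} (hc : ∀ i, HasFourierCoeff (F i) μ (c i)) :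
    ∃ L, Tendsto c p (𝓝 L) ∧ HasFourierCoeff g μ L :=
  (tendstoUniformlyOnFilter_fourierMean hF hFg μ).exists_tendsto_of_tendsto hc

theorem seriesEquiv_of_tendsto {lam : ℕ → ℝ} {a b : ℕ → ℂ} {τ : ℕ → ℝ}
    (hb : ∀ j, Tendsto (fun m => a j * Complex.exp (Complex.I * lam j * τ m)) atTop (𝓝 (b j))) :
    SeriesEquiv lam a b := by
  intro n
  let V := Submodule.span ℚ (lam '' {j | j ≤ n})
  have : FiniteDimensional ℚ V :=
    FiniteDimensional.span_of_finite ℚ ((Set.finite_Iic n).image lam)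
  have : Finite {j // j ≤ n} := (Set.finite_Iic n).to_subtype
  let w : {j // j ≤ n} → V := fun j => ⟨lam j, Submodule.subset_span ⟨j, j.2, rfl⟩⟩
  obtain ⟨e, he⟩ := Module.Basis.exists_repr_intCast_of_finite w
  obtain ⟨ψ, φ, hφ, hψ⟩ := e.exists_subseq_tendsto_circleExp fun m => τ m • V.subtype
  refine ⟨ψ, fun j hj => tendsto_nhds_unique ((hb j).comp hφ.tendsto_atTop) ?_⟩
  have hcoe : Continuous ((↑) : Circle → ℂ) := continuous_subtype_val
  have hexp : Tendsto (fun m => (Circle.exp ((τ (φ m) • V.subtype) (w ⟨j, hj⟩)) : ℂ)) atTop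
      (𝓝 (Circle.exp (ψ (w ⟨j, hj⟩)))) :=
    (hcoe.tendsto _).comp (hψ (w ⟨j, hj⟩) (he ⟨j, hj⟩))
  rw [mul_comm Complex.I (ψ _ : ℂ), ← Circle.coe_exp]
  refine tendsto_const_nhds.mul (hexp.congr fun m => ?_)
  simp only [w, Circle.coe_exp, LinearMap.smul_apply, Submodule.subtype_apply, smul_eq_mul]
  push_cast
  ring_nf

theorem ap_limit_of_translates_general (lam : ℕ → ℝ)
    (f g : ℝ → ℂ) (a : ℕ → ℂ) (hf : IsAP f) (hfs : HasFourierSeries f lam a)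
    (τ : ℕ → ℝ)
    (hlim : TendstoUniformly (fun n (t : ℝ) => f (t + τ n)) g Filter.atTop) :
    IsAP g ∧ ∃ b : ℕ → ℂ, HasFourierSeries g lam b ∧ SeriesEquiv lam a b := by
  obtain ⟨C, hC⟩ := hf.exists_norm_le
  have hcoeff : ∀ {μ c}, HasFourierCoeff f μ c → ∃ L,
      Tendsto (fun n => c * Complex.exp (Complex.I * μ * τ n)) atTop (𝓝 L) ∧
        HasFourierCoeff g μ L := fun h =>
    HasFourierCoeff.exists_of_tendstoUniformly (fun n => (hf.comp_add_right (τ n)).1) hlim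
      fun n => h.comp_add_right hf.1 hC (τ n)
  choose b hb hgb using fun j => hcoeff (hfs.1 j)
  refine ⟨IsAP.of_tendstoUniformly (fun n => hf.comp_add_right (τ n)) hlim, b,
    ⟨hgb, fun μ hμ => ?_⟩, seriesEquiv_of_tendsto hb⟩
  obtain ⟨L, hL, hgL⟩ := hcoeff (hfs.2 μ hμ)
  simp only [zero_mul] at hL
  rwa [tendsto_nhds_unique hL tendsto_const_nhds] at hgL

/-- Every uniform limit on `ℝ` of a sequence of translates of an almost periodic
function `f` is almost periodic and Bohr-equivalent to `f`. -/
theorem ap_limit_of_translates (lam : ℕ → ℝ) (hinj : Function.Injective lam)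
    (f g : ℝ → ℂ) (a : ℕ → ℂ) (hf : IsAP f) (hfs : HasFourierSeries f lam a)
    (τ : ℕ → ℝ)
    (hlim : TendstoUniformly (fun n (t : ℝ) => f (t + τ n)) g Filter.atTop) :
    IsAP g ∧ ∃ b : ℕ → ℂ, HasFourierSeries g lam b ∧ SeriesEquiv lam a b :=
  ap_limit_of_translates_general lam f g a hf hfs τ hlim
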